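/- Let G be a connected simple graph and let e be an edge of G such that G − e is connected. Then λ₁(D(G)) < λ₁(D(G − e)). -/

import Mathlib

open Finset

/-- The distance matrix of a graph: the `(i,j)` entry is the graph distance. -/
noncomputable def distMatrix {V : Type*} [Fintype V] (G : SimpleGraph V) : Matrix V V ℝ :=
  fun i j => (G.dist i j : ℝ)

/-- The distance spectral radius: the largest eigenvalue of the distance matrix
(for a connected graph the eigenvalue set is nonempty, and the distance matrix is
real symmetric, so its largest eigenvalue is the supremum of its real eigenvalues). -/
noncomputable def distSpecRad {V : Type*} [Fintype V] (G : SimpleGraph V) : ℝ := by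
  classical
  exact sSup {μ : ℝ | Module.End.HasEigenvalue (Matrix.toLin' (distMatrix G)) μ}

/-- The join `G ∨ H` of two graphs: disjoint union together with all edges in between. -/
def graphJoin {α β : Type*} (G : SimpleGraph α) (H : SimpleGraph β) : SimpleGraph (α ⊕ β) where
  Adj x y :=
    match x, y with
    | Sum.inl a, Sum.inl b => G.Adj a b
    | Sum.inr a, Sum.inr b => H.Adj a b
    | _, _ => True
  symm := ⟨by
    rintro (a | a) (b | b) h
    · exact G.adj_symm h
    · trivial
    · trivial
    · exact H.adj_symm h⟩
  loopless := ⟨by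
    rintro (a | a) h
    · exact G.irrefl h
    · exact H.irrefl h⟩

/-- `S_{n,t} = K_t ∨ (n-t)K₁`. -/
def starLike (n t : ℕ) : SimpleGraph (Fin t ⊕ Fin (n - t)) :=
  graphJoin (⊤ : SimpleGraph (Fin t)) (⊥ : SimpleGraph (Fin (n - t)))

/-- The sum of the values of `f` over the edges incident with `v`. -/
noncomputable def incSum {V : Type*} [Fintype V] (G : SimpleGraph V) (f : Sym2 V → ℕ)
    (v : V) : ℕ := by
  classical
  exact ∑ e ∈ Finset.univ.filter (fun e : Sym2 V => e ∈ G.incidenceSet v), f e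

/-- A `k`-matching of `G`: a function on edges with values in `{0,…,k}` whose sum over
the edges incident with any vertex is at most `k`. -/
def IsKMatching {V : Type*} [Fintype V] (G : SimpleGraph V) (k : ℕ) (f : Sym2 V → ℕ) : Prop :=
  (∀ e, f e ≤ k) ∧ (∀ e, e ∉ G.edgeSet → f e = 0) ∧ (∀ v : V, incSum G f v ≤ k)

/-- A perfect `k`-matching: the sum over the edges incident with any vertex equals `k`. -/
def IsPerfectKMatching {V : Type*} [Fintype V] (G : SimpleGraph V) (k : ℕ)
    (f : Sym2 V → ℕ) : Prop :=
  IsKMatching G k f ∧ ∀ v : V, incSum G f v = k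

/-- `G` has a perfect `k`-matching. -/
def HasPerfectKMatching {V : Type*} [Fintype V] (G : SimpleGraph V) (k : ℕ) : Prop :=
  ∃ f : Sym2 V → ℕ, IsPerfectKMatching G k f

/-- `G` is `k`-`d`-critical. -/
def IsKDCritical {V : Type*} [Fintype V] (G : SimpleGraph V) (k d : ℕ) : Prop :=
  ∀ v : V, ∃ h : Sym2 V → ℕ, IsKMatching G k h ∧ incSum G h v = k - d ∧
    ∀ u : V, u ≠ v → incSum G h u = k

/-- `i(G - S)`: the number of isolated vertices of `G - S`. -/
noncomputable def numIsolated {V : Type*} [Fintype V] (G : SimpleGraph V) (S : Set V) : ℕ :=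
  Nat.card {v : ↥(Sᶜ) | ∀ u, ¬ (G.induce Sᶜ).Adj v u}

/-- `odd(G - S)`: the number of nontrivial odd connected components of `G - S`. -/
noncomputable def numOddNontrivial {V : Type*} [Fintype V] (G : SimpleGraph V) (S : Set V) : ℕ :=
  Nat.card {c : (G.induce Sᶜ).ConnectedComponent //
    Odd (Nat.card c.supp) ∧ 1 < Nat.card c.supp}

/-- `K₁ ∨ (K_{n-2} ∪ K₁)`. -/
def Gstar (n : ℕ) : SimpleGraph (Fin 1 ⊕ (Fin (n - 2) ⊕ Fin 1)) :=
  graphJoin (⊤ : SimpleGraph (Fin 1))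
    ((⊤ : SimpleGraph (Fin (n - 2))) ⊕g (⊥ : SimpleGraph (Fin 1)))

/-- `K₁ ∨ (K_{n-3} ∪ 2K₁)`. -/
def GstarPM (n : ℕ) : SimpleGraph (Fin 1 ⊕ (Fin (n - 3) ⊕ Fin 2)) :=
  graphJoin (⊤ : SimpleGraph (Fin 1))
    ((⊤ : SimpleGraph (Fin (n - 3))) ⊕g (⊥ : SimpleGraph (Fin 2)))

/-- `K_s ∨ (K_{n-2s} ∪ sK₁)`. -/
def Gsn (n s : ℕ) : SimpleGraph (Fin s ⊕ (Fin (n - 2 * s) ⊕ Fin s)) :=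
  graphJoin (⊤ : SimpleGraph (Fin s))
    ((⊤ : SimpleGraph (Fin (n - 2 * s))) ⊕g (⊥ : SimpleGraph (Fin s)))

/-- The "generalized factor-critical" condition for odd `k`:
`odd(G-S) + k·i(G-S) ≤ k|S| - 1` for every nonempty proper subset `S` of `V(G)`. -/
def IsGFCodd {V : Type*} [Fintype V] (G : SimpleGraph V) (k : ℕ) : Prop :=
  ∀ S : Set V, S.Nonempty → S ≠ Set.univ →
    (numOddNontrivial G S : ℤ) + k * numIsolated G S ≤ k * S.ncard - 1

/-- The "generalized bicritical" condition for odd `k`: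
`odd(G-S) + k·i(G-S) ≤ k|S| - 2` for every nonempty proper subset `S` of `V(G)`. -/
def IsGBCodd {V : Type*} [Fintype V] (G : SimpleGraph V) (k : ℕ) : Prop :=
  ∀ S : Set V, S.Nonempty → S ≠ Set.univ →
    (numOddNontrivial G S : ℤ) + k * numIsolated G S ≤ k * S.ncard - 2

/-- The "generalized factor-critical / bicritical" condition for even `k`:
`i(G-S) ≤ |S| - 1` for every nonempty proper subset `S` of `V(G)`. -/
def IsGFCBCeven {V : Type*} [Fintype V] (G : SimpleGraph V) : Prop :=
  ∀ S : Set V, S.Nonempty → S ≠ Set.univ →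
    (numIsolated G S : ℤ) ≤ S.ncard - 1

/-- The Wiener index of a graph on `Fin n`: the sum of distances over pairs `i < j`. -/
noncomputable def wienerFin {n : ℕ} (G : SimpleGraph (Fin n)) : ℕ :=
  ∑ p ∈ Finset.univ.filter (fun p : Fin n × Fin n => p.1 < p.2), G.dist p.1 p.2

open Module.End

private lemma eig_transfer {V : Type*} [Fintype V] [DecidableEq V] (M : Matrix V V ℝ) (μ : ℝ) :
    HasEigenvalue (Matrix.toLin' M) μ ↔ HasEigenvalue (Matrix.toEuclideanLin M) μ := by
  constructor
  · intro h
    obtain ⟨x, hx⟩ := h.exists_hasEigenvector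
    refine hasEigenvalue_of_hasEigenvector (x := (WithLp.equiv 2 (V → ℝ)).symm x) ⟨?_, ?_⟩
    · rw [mem_eigenspace_iff, WithLp.equiv_symm_apply, Matrix.toEuclideanLin_apply_piLp_toLp, ← Matrix.toLin'_apply,
        hx.apply_eq_smul]
      rfl
    · simpa using hx.2
  · intro h
    obtain ⟨x, hx⟩ := h.exists_hasEigenvector
    refine hasEigenvalue_of_hasEigenvector (x := (WithLp.equiv 2 (V → ℝ)) x) ⟨?_, ?_⟩
    · rw [mem_eigenspace_iff]
      have h2 := congrArg (WithLp.equiv 2 (V → ℝ)) hx.apply_eq_smul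
      rw [WithLp.equiv_apply, Matrix.piLp_ofLp_toEuclideanLin] at h2
      rw [Matrix.toLin'_apply] at h2 ⊢
      exact h2
    · simpa using hx.2

private lemma specrad_key {V : Type*} [Fintype V] [DecidableEq V] [Nonempty V]
    (M : Matrix V V ℝ) (hM : M.IsHermitian) :
    (∃ x : EuclideanSpace ℝ V, x ≠ 0 ∧
        Matrix.toEuclideanLin M x
          = (sSup {μ : ℝ | HasEigenvalue (Matrix.toLin' M) μ}) • x) ∧
      ∀ z : EuclideanSpace ℝ V, z ≠ 0 →
        (inner ℝ (Matrix.toEuclideanLin M z) z : ℝ) / ‖z‖ ^ 2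
          ≤ sSup {μ : ℝ | HasEigenvalue (Matrix.toLin' M) μ} := by
  set T := Matrix.toEuclideanLin M with hT
  have hTsym : T.IsSymmetric := Matrix.isHermitian_iff_isSymmetric.mp hM
  haveI : Nontrivial (EuclideanSpace ℝ V) := inferInstance
  set R : ℝ := ⨆ x : {x : EuclideanSpace ℝ V // x ≠ 0},
      (inner ℝ (T x.1) x.1 : ℝ) / ‖x.1‖ ^ 2 with hRdef
  have hRg : HasEigenvalue T R := by
    have := hTsym.hasEigenvalue_iSup_of_finiteDimensional
    simpa using this
  set T' : EuclideanSpace ℝ V →L[ℝ] EuclideanSpace ℝ V := LinearMap.toContinuousLinearMap T with hT'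
  have hray_le : ∀ z : EuclideanSpace ℝ V, z ≠ 0 → (inner ℝ (T z) z : ℝ)/‖z‖^2 ≤ ‖T'‖ := by
    intro z hz
    have h1 : (inner ℝ (T z) z : ℝ) ≤ ‖T z‖ * ‖z‖ := real_inner_le_norm _ _
    have h2 : ‖T z‖ ≤ ‖T'‖ * ‖z‖ := T'.le_opNorm z
    have hz2 : (0:ℝ) < ‖z‖ := norm_pos_iff.mpr hz
    rw [div_le_iff₀ (by positivity)]
    nlinarith [norm_nonneg (T z), norm_nonneg z]
  have hbdd : BddAbove (Set.range fun x : {x : EuclideanSpace ℝ V // x ≠ 0} =>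
      (inner ℝ (T x.1) x.1 : ℝ)/‖x.1‖^2) := by
    refine ⟨‖T'‖, ?_⟩
    rintro r ⟨x, rfl⟩
    exact hray_le x.1 x.2
  have heig_ray : ∀ μ : ℝ, HasEigenvalue T μ → μ ≤ R := by
    intro μ hμ
    obtain ⟨x, hx⟩ := hμ.exists_hasEigenvector
    have hxe : T x = μ • x := hx.apply_eq_smul
    have hx0 : x ≠ 0 := hx.2
    have hxn : (0:ℝ) < ‖x‖ := norm_pos_iff.mpr hx0
    have hval : (inner ℝ (T x) x : ℝ)/‖x‖^2 = μ := by
      rw [hxe, real_inner_smul_left, real_inner_self_eq_norm_sq]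
      field_simp
    rw [← hval]
    exact le_ciSup hbdd ⟨x, hx0⟩
  have hSmem : R ∈ {μ : ℝ | HasEigenvalue (Matrix.toLin' M) μ} := (eig_transfer M R).2 hRg
  have hS_bdd : BddAbove {μ : ℝ | HasEigenvalue (Matrix.toLin' M) μ} :=
    ⟨R, fun μ hμ => heig_ray μ ((eig_transfer M μ).1 hμ)⟩
  have hsup : sSup {μ : ℝ | HasEigenvalue (Matrix.toLin' M) μ} = R :=
    le_antisymm (csSup_le ⟨R, hSmem⟩ (fun μ hμ => heig_ray μ ((eig_transfer M μ).1 hμ)))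
      (le_csSup hS_bdd hSmem)
  constructor
  · obtain ⟨x, hx⟩ := hRg.exists_hasEigenvector
    exact ⟨x, hx.2, by rw [hsup]; exact hx.apply_eq_smul⟩
  · intro z hz
    rw [hsup]
    exact le_ciSup hbdd ⟨z, hz⟩

private lemma eigen_of_max {V : Type*} [Fintype V] [DecidableEq V]
    (M : Matrix V V ℝ) (hM : M.IsHermitian) {y : EuclideanSpace ℝ V} (hy : y ≠ 0) {lam : ℝ}
    (hval : (inner ℝ (Matrix.toEuclideanLin M y) y : ℝ) / ‖y‖ ^ 2 = lam)
    (hmax : ∀ z : EuclideanSpace ℝ V, z ≠ 0 →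
      (inner ℝ (Matrix.toEuclideanLin M z) z : ℝ) / ‖z‖ ^ 2 ≤ lam) :
    Matrix.toEuclideanLin M y = lam • y := by
  set T := Matrix.toEuclideanLin M with hT
  have hTsym : T.IsSymmetric := Matrix.isHermitian_iff_isSymmetric.mp hM
  set T' := hTsym.toSelfAdjoint with hT'
  have happ : ∀ z, T'.1 z = T z := fun z => rfl
  have hre : ∀ z, T'.1.reApplyInnerSelf z = (inner ℝ (T z) z : ℝ) := by
    intro z
    simp [ContinuousLinearMap.reApplyInnerSelf, happ]
  have hyn : (0:ℝ) < ‖y‖ := norm_pos_iff.mpr hy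
  have hextr : IsMaxOn T'.1.reApplyInnerSelf (Metric.sphere (0:EuclideanSpace ℝ V) ‖y‖) y := by
    intro z hz
    have hzn : ‖z‖ = ‖y‖ := by simpa using hz
    have hz0 : z ≠ 0 := by
      intro h0; rw [h0, norm_zero] at hzn; exact hyn.ne hzn
    have h1 := hmax z hz0
    have h2 : (inner ℝ (T z) z : ℝ) ≤ lam * ‖z‖^2 := by
      have hzn2 : (0:ℝ) < ‖z‖^2 := pow_pos (norm_pos_iff.mpr hz0) 2
      rw [div_le_iff₀ hzn2] at h1
      linarith
    have h3 : lam * ‖y‖^2 = (inner ℝ (T y) y : ℝ) := by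
      rw [← hval]; field_simp
    simp only [Set.mem_setOf_eq, hre]
    rw [hzn] at h2
    linarith
  have hev := T'.prop.hasEigenvector_of_isMaxOn hy hextr
  have hcoe : (T'.1 : EuclideanSpace ℝ V →ₗ[ℝ] EuclideanSpace ℝ V) = T :=
    hTsym.coe_toSelfAdjoint
  haveI : Nonempty {x : EuclideanSpace ℝ V // x ≠ 0} := ⟨⟨y, hy⟩⟩
  have hiSup : (⨆ x : {x : EuclideanSpace ℝ V // x ≠ 0}, T'.1.rayleighQuotient x) = lam := by
    have hray : ∀ x : {x : EuclideanSpace ℝ V // x ≠ 0},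
        T'.1.rayleighQuotient x.1 = (inner ℝ (T x.1) x.1 : ℝ) / ‖x.1‖^2 := by
      intro x
      simp [ContinuousLinearMap.rayleighQuotient, hre]
    have hbdd : BddAbove (Set.range fun x : {x : EuclideanSpace ℝ V // x ≠ 0} =>
        T'.1.rayleighQuotient x.1) := by
      refine ⟨lam, ?_⟩
      rintro r ⟨x, rfl⟩
      simpa [hray x] using hmax x.1 x.2
    apply le_antisymm
    · exact ciSup_le fun x => by simpa [hray x] using hmax x.1 x.2
    · rw [← hval, ← hray ⟨y, hy⟩]
      exact le_ciSup hbdd ⟨y, hy⟩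
  have := hev.apply_eq_smul
  rw [hcoe] at this
  simpa [hiSup] using this

private lemma inner_qf {V : Type*} [Fintype V] [DecidableEq V] (M : Matrix V V ℝ)
    (x : EuclideanSpace ℝ V) :
    (inner ℝ (Matrix.toEuclideanLin M x) x : ℝ) = ∑ i, ∑ j, M i j * x j * x i := by
  simp [PiLp.inner_apply, Matrix.toEuclideanLin_apply, Matrix.mulVec, dotProduct,
    Finset.sum_mul]
  exact Finset.sum_congr rfl fun i _ => by
    rw [Finset.mul_sum]; exact Finset.sum_congr rfl fun j _ => by ring
private lemma distSpecRad_eq_sSup {V : Type*} [Fintype V] [DecidableEq V] (G : SimpleGraph V) :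
    distSpecRad G
      = sSup {μ : ℝ | Module.End.HasEigenvalue (Matrix.toLin' (distMatrix G)) μ} := by
  unfold distSpecRad
  congr!


theorem statement17 {V : Type*} [Fintype V] (G : SimpleGraph V) (hG : G.Connected)
    (e : Sym2 V) (he : e ∈ G.edgeSet) (hconn : (G.deleteEdges {e}).Connected) :
    distSpecRad G < distSpecRad (G.deleteEdges {e}) := by
  classical
  induction e using Sym2.ind with
  | _ u v =>
  rw [SimpleGraph.mem_edgeSet] at he
  have huv : u ≠ v := G.ne_of_adj he
  haveI : Nonempty V := ⟨u⟩
  set H := G.deleteEdges {s(u,v)} with hH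
  set A := distMatrix G with hA
  set B := distMatrix H with hB
  -- basic matrix facts
  have hAsym : A.IsHermitian := by
    ext i j
    simp [Matrix.conjTranspose_apply, hA, distMatrix, SimpleGraph.dist_comm]
  have hBsym : B.IsHermitian := by
    ext i j
    simp [Matrix.conjTranspose_apply, hB, distMatrix, SimpleGraph.dist_comm]
  have hA0 : ∀ i j, 0 ≤ A i j := fun i j => Nat.cast_nonneg _
  have hreach : ∀ i j : V, H.Reachable i j := fun i j => hconn.preconnected i j
  have hAB : ∀ i j, A i j ≤ B i j := by
    intro i j
    have h := SimpleGraph.Reachable.dist_anti (SimpleGraph.deleteEdges_le _) (hreach i j)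
    show (distMatrix G) i j ≤ (distMatrix H) i j
    simp only [distMatrix]
    exact_mod_cast h
  have hApos : ∀ i j, i ≠ j → 0 < A i j := by
    intro i j hij
    have h := hG.pos_dist_of_ne hij
    show (0:ℝ) < (distMatrix G) i j
    simp only [distMatrix]
    exact_mod_cast h
  have hAuv : A u v = 1 := by
    have h1 : G.dist u v = 1 := SimpleGraph.dist_eq_one_iff_adj.2 he
    simp [hA, distMatrix, h1]
  have hBuv : (2:ℝ) ≤ B u v := by
    have hnadja : ¬ H.Adj u v := by simp [hH, SimpleGraph.deleteEdges_adj]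
    have h1 : H.dist u v ≠ 1 := fun h => hnadja (SimpleGraph.dist_eq_one_iff_adj.1 h)
    have h0 : 0 < H.dist u v := hconn.pos_dist_of_ne huv
    have h2 : 2 ≤ H.dist u v := by omega
    show (2:ℝ) ≤ (distMatrix H) u v
    simp only [distMatrix]
    exact_mod_cast h2
  have hABuv : A u v < B u v := by rw [hAuv]; linarith
  -- spectral setup
  obtain ⟨⟨x, hx0, hxeig⟩, hbA⟩ := specrad_key A hAsym
  obtain ⟨-, hbB⟩ := specrad_key B hBsym
  set lamA := sSup {μ : ℝ | HasEigenvalue (Matrix.toLin' A) μ} with hlamA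
  set lamB := sSup {μ : ℝ | HasEigenvalue (Matrix.toLin' B) μ} with hlamB
  -- the absolute-value vector
  set y : EuclideanSpace ℝ V := (WithLp.equiv 2 (V → ℝ)).symm (fun i => |x i|) with hy
  have hyi : ∀ i, y i = |x i| := fun i => rfl
  have hy0 : y ≠ 0 := by
    intro h0
    apply hx0
    ext i
    have : y i = 0 := by rw [h0]; rfl
    have := abs_eq_zero.mp ((hyi i) ▸ this)
    exact this
  have hynn : ∀ i, 0 ≤ y i := fun i => (hyi i) ▸ abs_nonneg _
  have hxn : (0:ℝ) < ‖x‖ := norm_pos_iff.mpr hx0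
  have hyn : (0:ℝ) < ‖y‖ := norm_pos_iff.mpr hy0
  have hnorm : ‖y‖ = ‖x‖ := by
    rw [EuclideanSpace.norm_eq, EuclideanSpace.norm_eq]
    congr 1
    apply Finset.sum_congr rfl
    intro i _
    rw [hyi i]
    simp [Real.norm_eq_abs, sq_abs, abs_abs]
  -- Rayleigh quotient of y equals lamA
  have hqx : (inner ℝ (Matrix.toEuclideanLin A x) x : ℝ) = lamA * ‖x‖^2 := by
    rw [hxeig, real_inner_smul_left, real_inner_self_eq_norm_sq]
  have hq_mono : (inner ℝ (Matrix.toEuclideanLin A x) x : ℝ)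
      ≤ (inner ℝ (Matrix.toEuclideanLin A y) y : ℝ) := by
    rw [inner_qf, inner_qf]
    apply Finset.sum_le_sum
    intro i _
    apply Finset.sum_le_sum
    intro j _
    calc A i j * x j * x i = A i j * (x j * x i) := by ring
    _ ≤ A i j * |x j * x i| := mul_le_mul_of_nonneg_left (le_abs_self _) (hA0 i j)
    _ = A i j * (|x j| * |x i|) := by rw [abs_mul]
    _ = A i j * y j * y i := by rw [hyi i, hyi j]; ring
  have hvalA : (inner ℝ (Matrix.toEuclideanLin A y) y : ℝ) / ‖y‖^2 = lamA := by
    apply le_antisymm (hbA y hy0)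
    rw [le_div_iff₀ (by positivity)]
    calc lamA * ‖y‖^2 = lamA * ‖x‖^2 := by rw [hnorm]
    _ = (inner ℝ (Matrix.toEuclideanLin A x) x : ℝ) := hqx.symm
    _ ≤ _ := hq_mono
  have hyeig : Matrix.toEuclideanLin A y = lamA • y := eigen_of_max A hAsym hy0 hvalA hbA
  -- lamA is positive
  have hlamApos : (0:ℝ) < lamA := by
    set one : EuclideanSpace ℝ V := (WithLp.equiv 2 (V → ℝ)).symm (fun _ => (1:ℝ)) with hone
    have honei : ∀ i, one i = 1 := fun i => rfl
    have hone0 : one ≠ 0 := by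
      intro h0
      have : one u = 0 := by rw [h0]; rfl
      rw [honei u] at this
      norm_num at this
    have hq1 : (inner ℝ (Matrix.toEuclideanLin A one) one : ℝ) = ∑ i, ∑ j, A i j := by
      rw [inner_qf]
      apply Finset.sum_congr rfl
      intro i _
      apply Finset.sum_congr rfl
      intro j _
      rw [honei i, honei j]; ring
    have hqpos : (0:ℝ) < ∑ i, ∑ j, A i j := by
      apply Finset.sum_pos' (fun i _ => Finset.sum_nonneg fun j _ => hA0 i j)
      refine ⟨u, Finset.mem_univ u, ?_⟩
      have h1 : A u v ≤ ∑ j, A u j :=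
        Finset.single_le_sum (fun j _ => hA0 u j) (Finset.mem_univ v)
      rw [hAuv] at h1
      linarith
    have := hbA one hone0
    rw [hq1] at this
    have hnpos : (0:ℝ) < ‖one‖^2 := pow_pos (norm_pos_iff.mpr hone0) 2
    have := div_pos hqpos hnpos
    linarith [hbA one hone0, (div_le_iff₀ hnpos).mp (le_refl ((∑ i, ∑ j, A i j)/‖one‖^2))]
  -- all entries of y are positive
  have hyapply : ∀ i, (∑ j, A i j * y j) = lamA * y i := by
    intro i
    have h1 : (Matrix.toEuclideanLin A y) i = lamA * y i := by
      rw [hyeig]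
      simp [PiLp.smul_apply, smul_eq_mul]
    rw [← h1, Matrix.toEuclideanLin_apply]
    simp [Matrix.mulVec, dotProduct]
  obtain ⟨i₀, hi₀⟩ : ∃ i, 0 < y i := by
    by_contra h
    push_neg at h
    apply hy0
    ext i
    exact le_antisymm (h i) (hynn i)
  have hypos : ∀ i, 0 < y i := by
    intro i
    rcases eq_or_ne i i₀ with rfl | hne
    · exact hi₀
    · have h2 : A i i₀ * y i₀ ≤ ∑ j, A i j * y j :=
        Finset.single_le_sum (fun j _ => mul_nonneg (hA0 i j) (hynn j)) (Finset.mem_univ i₀)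
      have h3 : 0 < lamA * y i := by
        have := mul_pos (hApos i i₀ hne) hi₀
        rw [hyapply i] at h2
        linarith
      nlinarith [hynn i]
  -- strict inequality of quadratic forms
  have hstrict : (inner ℝ (Matrix.toEuclideanLin A y) y : ℝ)
      < (inner ℝ (Matrix.toEuclideanLin B y) y : ℝ) := by
    rw [inner_qf, inner_qf, ← Finset.sum_product', ← Finset.sum_product']
    apply Finset.sum_lt_sum
    · rintro ⟨i, j⟩ -
      exact mul_le_mul_of_nonneg_right
        (mul_le_mul_of_nonneg_right (hAB i j) (hynn j)) (hynn i)
    · refine ⟨(u, v), Finset.mem_product.mpr ⟨Finset.mem_univ u, Finset.mem_univ v⟩, ?_⟩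
      exact mul_lt_mul_of_pos_right (mul_lt_mul_of_pos_right hABuv (hypos v)) (hypos u)
  -- conclude
  have hfinal : lamA < lamB := by
    calc lamA = (inner ℝ (Matrix.toEuclideanLin A y) y : ℝ) / ‖y‖^2 := hvalA.symm
    _ < (inner ℝ (Matrix.toEuclideanLin B y) y : ℝ) / ‖y‖^2 := by
        have hc : (0:ℝ) < ‖y‖^2 := by positivity
        exact div_lt_div_of_pos_right hstrict hc
    _ ≤ lamB := hbB y hy0
  rw [distSpecRad_eq_sSup G, distSpecRad_eq_sSup]
  exact hfinal
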